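/- arXiv:1603.08156 — 5 statements merged into one kernel-verified Lean document; each statement's English description precedes it below -/
import Mathlib

section
/- Fix M ≥ 2, n ∈ ℕ, and let Π(x,y) = x+y. Let A_n ⊆ [0,1) be any union of M-adic intervals of generation n and define Y_n^u = β_n² · H¹(Π^{-1}(u) ∩ (A_n × A_n)). Then u ↦ Y_n^u is affine (linear) on each M-adic interval of generation n contained in [0,1) and on each M-adic interval of generation n contained in [1,2). -/
open MeasureTheory Set
open scoped ENNReal

/-- The union of the generation-`n` `M`-adic intervals indexed by `S`. -/
def adicUnion (M n : ℕ) (S : Finset ℕ) : Set ℝ :=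
  ⋃ j ∈ S, Set.Ico ((j : ℝ) / (M : ℝ) ^ n) (((j : ℝ) + 1) / (M : ℝ) ^ n)

/-- `Y_n^u = β² · H¹(Π⁻¹(u) ∩ (A × A))` where `A` is the union of the `M`-adic
intervals indexed by `S` and `Π(x,y) = x + y`. -/
noncomputable def Yfun (M n : ℕ) (S : Finset ℕ) (β : ℝ) (u : ℝ) : ℝ :=
  β ^ 2 * ((μH[1] : Measure (ℝ × ℝ))
    ({p : ℝ × ℝ | p.1 + p.2 = u} ∩ (adicUnion M n S ×ˢ adicUnion M n S))).toReal

/-!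
Via the isometry `x ↦ (x, u - x)` (for the sup metric on `ℝ × ℝ`), `H¹(Π⁻¹(u) ∩ (A × A))` is the
length of `A ∩ (u - A)`, a finite sum over pairs `(i, j)` of overlaps of an `M`-adic interval `I_i`
with a reflected one `u - I_j`. After rescaling by `M ^ n`, the overlap of `[i, i + 1)` and
`(t - j - 1, t - j]` is the tent function of `t - i - j`, which is affine on every interval
`[k, k + 1)` with `k ∈ ℤ`; a sum of affine functions is affine.
-/

open scoped Function

def AffineOn (f : ℝ → ℝ) (s : Set ℝ) : Prop :=
  ∃ a b : ℝ, ∀ x ∈ s, f x = a * x + b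

namespace AffineOn

variable {f g : ℝ → ℝ} {s : Set ℝ}

lemma congr (hf : AffineOn f s) (h : EqOn f g s) : AffineOn g s := by
  obtain ⟨a, b, hab⟩ := hf
  exact ⟨a, b, fun x hx => (h hx).symm.trans (hab x hx)⟩

lemma add (hf : AffineOn f s) (hg : AffineOn g s) : AffineOn (fun x => f x + g x) s := by
  obtain ⟨a, b, hab⟩ := hf
  obtain ⟨a', b', hab'⟩ := hg
  exact ⟨a + a', b + b', fun x hx => by simp only [hab x hx, hab' x hx]; ring⟩

lemma const_mul (hf : AffineOn f s) (c : ℝ) : AffineOn (fun x => c * f x) s := by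
  obtain ⟨a, b, hab⟩ := hf
  exact ⟨c * a, c * b, fun x hx => by simp only [hab x hx]; ring⟩

lemma comp_const_mul (hf : AffineOn f s) (c : ℝ) :
    AffineOn (fun x => f (c * x)) ((c * ·) ⁻¹' s) := by
  obtain ⟨a, b, hab⟩ := hf
  exact ⟨a * c, b, fun x hx => by simp only [hab (c * x) hx]; ring⟩

lemma finset_sum {ι : Type*} (t : Finset ι) {f : ι → ℝ → ℝ} (h : ∀ i ∈ t, AffineOn (f i) s) :
    AffineOn (fun x => ∑ i ∈ t, f i x) s := by
  classical
  induction t using Finset.induction_on with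
  | empty => exact ⟨0, 0, fun x _ => by simp⟩
  | insert i t hi ih =>
    simp only [Finset.sum_insert hi]
    exact (h i (Finset.mem_insert_self i t)).add
      (ih fun j hj => h j (Finset.mem_insert_of_mem hj))

end AffineOn

lemma toReal_volume_Ico_inter_Ioc (a b c d : ℝ) :
    (volume (Ico a b ∩ Ioc c d)).toReal = max (min b d - max a c) 0 := by
  rw [measure_congr ((ae_eq_refl _).inter Ico_ae_eq_Ioc.symm), Ico_inter_Ico, Real.volume_Ico,
    ENNReal.toReal_ofReal']

lemma affineOn_toReal_volume_Ico_inter_preimage_sub (i j k : ℤ) :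
    AffineOn (fun t => (volume (Ico (i : ℝ) (i + 1) ∩ (t - ·) ⁻¹' Ico (j : ℝ) (j + 1))).toReal)
      (Ico (k : ℝ) (k + 1)) := by
  simp only [preimage_const_sub_Ico, toReal_volume_Ico_inter_Ioc]
  obtain h | h | h | h : (i + j : ℝ) = k ∨ (i + j + 1 : ℝ) = k ∨ (k + 1 : ℝ) ≤ i + j ∨
      (i + j + 2 : ℝ) ≤ k := by
    exact_mod_cast (by omega : i + j = k ∨ i + j + 1 = k ∨ k + 1 ≤ i + j ∨ i + j + 2 ≤ k)
  · exact ⟨1, -k, fun t ⟨_, _⟩ => by simp only [min_def, max_def]; split_ifs <;> linarith⟩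
  · exact ⟨-1, k + 1, fun t ⟨_, _⟩ => by simp only [min_def, max_def]; split_ifs <;> linarith⟩
  all_goals exact ⟨0, 0, fun t ⟨_, _⟩ => by simp only [min_def, max_def]; split_ifs <;> linarith⟩

lemma volume_Ico_div_inter_preimage_sub {c : ℝ} (hc : 0 < c) (x y u : ℝ) :
    volume (Ico (x / c) ((x + 1) / c) ∩ (u - ·) ⁻¹' Ico (y / c) ((y + 1) / c)) =
      ENNReal.ofReal c⁻¹ * volume (Ico x (x + 1) ∩ (c * u - ·) ⁻¹' Ico y (y + 1)) := by
  rw [← abs_of_pos (inv_pos.2 hc), ← Real.volume_preimage_mul_left hc.ne', preimage_inter,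
    preimage_const_mul_Ico₀ _ _ hc, ← preimage_const_mul_Ico₀ y (y + 1) hc, preimage_preimage,
    preimage_preimage]
  simp_rw [mul_sub]

lemma affineOn_toReal_volume_Ico_div_inter_preimage_sub {c : ℝ} (hc : 0 < c) (i j k : ℤ) :
    AffineOn (fun u => (volume (Ico ((i : ℝ) / c) ((i + 1) / c) ∩
        (u - ·) ⁻¹' Ico ((j : ℝ) / c) ((j + 1) / c))).toReal)
      (Ico ((k : ℝ) / c) ((k + 1) / c)) := by
  have h := ((affineOn_toReal_volume_Ico_inter_preimage_sub i j k).comp_const_mul c).const_mul c⁻¹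
  rw [preimage_const_mul_Ico₀ _ _ hc] at h
  refine h.congr fun u _ => ?_
  simp only [volume_Ico_div_inter_preimage_sub hc, ENNReal.toReal_mul,
    ENNReal.toReal_ofReal (inv_nonneg.2 hc.le)]

lemma measure_biUnion_inter_biUnion_finset {α ι κ : Type*} [MeasurableSpace α] (μ : Measure α)
    {S : Finset ι} {T : Finset κ} {I : ι → Set α} {J : κ → Set α}
    (hI : PairwiseDisjoint ↑S I) (hJ : PairwiseDisjoint ↑T J)
    (hIm : ∀ i ∈ S, MeasurableSet (I i)) (hJm : ∀ j ∈ T, MeasurableSet (J j)) :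
    μ ((⋃ i ∈ S, I i) ∩ ⋃ j ∈ T, J j) = ∑ i ∈ S, ∑ j ∈ T, μ (I i ∩ J j) := by
  have hJU : MeasurableSet (⋃ j ∈ T, J j) := Finset.measurableSet_biUnion T hJm
  rw [iUnion₂_inter, measure_biUnion_finset (hI.mono fun i => inter_subset_left)
    fun i hi => (hIm i hi).inter hJU]
  refine Finset.sum_congr rfl fun i hi => ?_
  rw [inter_iUnion₂, measure_biUnion_finset (hJ.mono fun j => inter_subset_right)
    fun j hj => (hIm i hi).inter (hJm j hj)]

lemma hausdorffMeasure_one_antidiagonal_inter_prod (u : ℝ) (A B : Set ℝ) :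
    μH[1] ({p : ℝ × ℝ | p.1 + p.2 = u} ∩ A ×ˢ B) = volume (A ∩ (u - ·) ⁻¹' B) := by
  have hiso : Isometry fun x : ℝ => (x, u - x) :=
    Isometry.of_dist_eq fun x y => by
      simp only [Prod.dist_eq, Real.dist_eq, sub_sub_sub_cancel_left, abs_sub_comm, max_self]
  have himage : {p : ℝ × ℝ | p.1 + p.2 = u} ∩ A ×ˢ B =
      (fun x => (x, u - x)) '' (A ∩ (u - ·) ⁻¹' B) := by
    ext ⟨x, y⟩
    simp only [mem_inter_iff, mem_ofPred_eq, mem_prod, mem_image, mem_preimage, Prod.mk.injEq]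
    constructor
    · rintro ⟨rfl, hx, hy⟩
      exact ⟨x, ⟨hx, by rwa [add_sub_cancel_left]⟩, rfl, add_sub_cancel_left x y⟩
    · rintro ⟨x, ⟨hx, hy⟩, rfl, rfl⟩
      exact ⟨add_sub_cancel x u, hx, hy⟩
  rw [himage, hiso.hausdorffMeasure_image (Or.inl zero_le_one), hausdorffMeasure_real]

lemma pairwise_disjoint_Ico_natCast_div (c : ℝ) :
    Pairwise (Disjoint on fun j : ℕ => Ico ((j : ℝ) / c) ((j + 1) / c)) := by
  intro i j hij
  simpa [Function.onFun, zsmul_eq_mul, div_eq_mul_inv] using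
    pairwise_disjoint_Ico_add_zsmul (0 : ℝ) c⁻¹ (Nat.cast_injective.ne hij : (i : ℤ) ≠ j)

lemma Yfun_eq_sum (M n : ℕ) (S : Finset ℕ) (β u : ℝ) :
    Yfun M n S β u = β ^ 2 * ∑ i ∈ S, ∑ j ∈ S,
      (volume (Ico ((i : ℝ) / (M : ℝ) ^ n) ((i + 1) / (M : ℝ) ^ n) ∩
        (u - ·) ⁻¹' Ico ((j : ℝ) / (M : ℝ) ^ n) ((j + 1) / (M : ℝ) ^ n))).toReal := by
  have hfin : ∀ i j : ℕ, volume (Ico ((i : ℝ) / (M : ℝ) ^ n) ((i + 1) / (M : ℝ) ^ n) ∩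
      (u - ·) ⁻¹' Ico ((j : ℝ) / (M : ℝ) ^ n) ((j + 1) / (M : ℝ) ^ n)) ≠ ∞ := fun _ _ =>
    measure_ne_top_of_subset inter_subset_left measure_Ico_lt_top.ne
  have hdisj := pairwise_disjoint_Ico_natCast_div ((M : ℝ) ^ n)
  rw [Yfun, hausdorffMeasure_one_antidiagonal_inter_prod, adicUnion, preimage_iUnion₂,
    measure_biUnion_inter_biUnion_finset _ (hdisj.set_pairwise _)
      (fun i _ j _ hij => (hdisj hij).preimage _) (fun _ _ => measurableSet_Ico)
      (fun _ _ => measurableSet_preimage (by fun_prop) measurableSet_Ico),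
    ENNReal.toReal_sum fun i _ => ENNReal.sum_ne_top.2 fun j _ => hfin i j]
  simp_rw [ENNReal.toReal_sum fun j _ => hfin _ j]

theorem Yfun_affine_on_adic_intervals_general
    (M n : ℕ) (hM : 2 ≤ M) (β : ℝ)
    (S : Finset ℕ) :
    ∀ j : ℕ, j < 2 * M ^ n → ∃ a b : ℝ,
      ∀ u ∈ Set.Ico ((j : ℝ) / (M : ℝ) ^ n) (((j : ℝ) + 1) / (M : ℝ) ^ n),
        Yfun M n S β u = a * u + b := by
  intro k _
  have hc : (0 : ℝ) < (M : ℝ) ^ n := by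
    have : (0 : ℝ) < M := by exact_mod_cast (by omega : 0 < M)
    positivity
  refine ((AffineOn.finset_sum S fun i _ => AffineOn.finset_sum S fun j _ => ?_).const_mul
    (β ^ 2)).congr fun u _ => (Yfun_eq_sum M n S β u).symm
  simpa only [Int.cast_natCast] using affineOn_toReal_volume_Ico_div_inter_preimage_sub hc i j k

/-- If `A_n ⊆ [0,1)` is a union of generation-`n` `M`-adic intervals,
then `u ↦ Y_n^u = β² H¹({x+y=u} ∩ (A_n × A_n))` is affine on each generation-`n`
`M`-adic interval contained in `[0,2)`. -/
theorem Yfun_affine_on_adic_intervals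
    (M n : ℕ) (hM : 2 ≤ M) (β : ℝ) (hβ : 1 ≤ β)
    (S : Finset ℕ) (hS : ∀ j ∈ S, j < M ^ n) :
    ∀ j : ℕ, j < 2 * M ^ n → ∃ a b : ℝ,
      ∀ u ∈ Set.Ico ((j : ℝ) / (M : ℝ) ^ n) (((j : ℝ) + 1) / (M : ℝ) ^ n),
        Yfun M n S β u = a * u + b :=
  Yfun_affine_on_adic_intervals_general M n hM β S
end

section
/- Let γ̃ ∈ (0,1] and let (Y_n)_{n∈ℕ} be a sequence of functions Y_n : [0,2] → [0,∞) such that: (a) |Y_n^u − Y^u| ≤ C M^{-nγ̃} for all n and u (where Y^u = lim_n Y_n^u exists), and (b) each Y_n is piecewise affine on M-adic intervals of generation n, with |Y_n^b − Y_n^a| ≤ C M^{n(1−γ_m)} M^{-n} whenever [a,b] is an M-adic interval of generation n and Y is γ_m-Hölder. Then, defining γ_0 = 0 and γ_{m+1} = γ̃/(1 + γ̃ − γ_m), the function u ↦ Y^u is Hölder continuous with exponent γ_{m+1} whenever it is Hölder with exponent γ_m; consequently Y is Hölder with every exponent γ < γ̃. -/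
open Set

/-!
If `Y` is `γ`-Hölder with constant `K`, the values of `Y_n` at the endpoints of a
generation-`n` interval differ by at most `2C M^{-nγ̃} + K M^{-nγ} ≤ (2C + K) M^{-nγ}`, so the
piecewise affine `Y_n` is `(2C + K) M^{n(1-γ)}`-Lipschitz on `[0,2]`. Hence
`|Y u - Y v| ≤ 2C M^{-nγ̃} + (2C + K) M^{n(1-γ)} |u - v|` for every `n`, and choosing `n` with
`M^{-n(1+γ̃-γ)} ≈ |u - v|` makes both terms of order `|u - v|^{γ̃/(1+γ̃-γ)}`.
Iterating from `γ_0 = 0` (`Y` is bounded) reaches every `γ < γ̃`, since `γ̃ - γ_m ≤ 1/m`.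
-/

def IsHolderOn (f : ℝ → ℝ) (s : Set ℝ) (γ : ℝ) : Prop :=
  ∃ K : ℝ, ∀ u ∈ s, ∀ v ∈ s, |f u - f v| ≤ K * |u - v| ^ γ

namespace IsHolderOn

variable {f : ℝ → ℝ} {s : Set ℝ} {γ : ℝ}

lemma exists_nonneg_const (hf : IsHolderOn f s γ) :
    ∃ K, 0 ≤ K ∧ ∀ u ∈ s, ∀ v ∈ s, |f u - f v| ≤ K * |u - v| ^ γ := by
  obtain ⟨K, hK⟩ := hf
  exact ⟨|K|, abs_nonneg K, fun u hu v hv =>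
    (hK u hu v hv).trans (mul_le_mul_of_nonneg_right (le_abs_self K) (by positivity))⟩

lemma of_bounded (hf : ∃ B, ∀ u ∈ s, |f u| ≤ B) : IsHolderOn f s 0 := by
  obtain ⟨B, hB⟩ := hf
  refine ⟨2 * B, fun u hu v hv => ?_⟩
  rw [Real.rpow_zero, mul_one, two_mul]
  exact (abs_sub _ _).trans (add_le_add (hB u hu) (hB v hv))

lemma of_exponent_le {a b γ' : ℝ} (hf : IsHolderOn f (Icc a b) γ') (hγγ' : γ ≤ γ') :
    IsHolderOn f (Icc a b) γ := by
  obtain ⟨K, hK0, hK⟩ := hf.exists_nonneg_const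
  refine ⟨K * (b - a) ^ (γ' - γ), fun u hu v hv => ?_⟩
  rcases eq_or_ne u v with rfl | huv
  · have hab : 0 ≤ b - a := by linarith [hu.1, hu.2]
    simp only [sub_self, abs_zero]
    positivity
  have hd : 0 < |u - v| := abs_pos.2 (sub_ne_zero.2 huv)
  calc |f u - f v| ≤ K * |u - v| ^ γ' := hK u hu v hv
    _ = K * |u - v| ^ (γ' - γ) * |u - v| ^ γ := by
        rw [mul_assoc, ← Real.rpow_add hd, sub_add_cancel]
    _ ≤ K * (b - a) ^ (γ' - γ) * |u - v| ^ γ := by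
        gcongr
        exact Real.dist_le_of_mem_Icc hu hv

end IsHolderOn

section Exponents

variable {γt : ℝ} {γseq : ℕ → ℝ}

lemma bootstrapSeq_mem_Ico (hγt0 : 0 < γt) (hγ0 : γseq 0 = 0)
    (hγrec : ∀ m, γseq (m + 1) = γt / (1 + γt - γseq m)) (m : ℕ) : γseq m ∈ Ico 0 γt := by
  induction m with
  | zero => simp [hγ0, hγt0]
  | succ m ih =>
    rw [hγrec m]
    refine ⟨div_nonneg hγt0.le (by linarith [ih.2]), (div_lt_iff₀ (by linarith [ih.2])).2 ?_⟩
    nlinarith [ih.2]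

lemma natCast_mul_sub_bootstrapSeq_le_one (hγt0 : 0 < γt) (hγt1 : γt ≤ 1) (hγ0 : γseq 0 = 0)
    (hγrec : ∀ m, γseq (m + 1) = γt / (1 + γt - γseq m)) (m : ℕ) :
    (m : ℝ) * (γt - γseq m) ≤ 1 := by
  induction m with
  | zero => simp
  | succ m ih =>
    have hlt := (bootstrapSeq_mem_Ico hγt0 hγ0 hγrec m).2
    have hgap : γt - γseq (m + 1) = γt * (γt - γseq m) / (1 + (γt - γseq m)) := by
      have hθ : 0 < 1 + γt - γseq m := by linarith
      rw [hγrec m]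
      field_simp
      ring
    rw [hgap, mul_div_assoc', div_le_one (by linarith)]
    push_cast
    nlinarith [mul_le_mul_of_nonneg_left hγt1 (sub_pos.2 hlt).le]

lemma exists_lt_bootstrapSeq (hγt0 : 0 < γt) (hγt1 : γt ≤ 1) (hγ0 : γseq 0 = 0)
    (hγrec : ∀ m, γseq (m + 1) = γt / (1 + γt - γseq m)) {γ : ℝ} (hγ : γ < γt) :
    ∃ m, γ < γseq m := by
  obtain ⟨m, hm⟩ := exists_nat_gt (γt - γ)⁻¹
  refine ⟨m, ?_⟩
  have hrate := natCast_mul_sub_bootstrapSeq_le_one hγt0 hγt1 hγ0 hγrec m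
  rw [inv_lt_iff_one_lt_mul₀ (sub_pos.2 hγ)] at hm
  nlinarith

end Exponents

section Lipschitz

variable {E : Type*} [PseudoMetricSpace E] {f : ℝ → E} {K : NNReal}

lemma LipschitzOnWith.Icc_union_Icc {a b c : ℝ} (hab : LipschitzOnWith K f (Icc a b))
    (hbc : LipschitzOnWith K f (Icc b c)) : LipschitzOnWith K f (Icc a c) := by
  rw [lipschitzOnWith_iff_dist_le_mul] at *
  intro x hx y hy
  wlog hxy : x ≤ y generalizing x y
  · rw [dist_comm, dist_comm x]
    exact this y hy x hx (le_of_not_ge hxy)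
  by_cases hyb : y ≤ b
  · exact hab x ⟨hx.1, hxy.trans hyb⟩ y ⟨hx.1.trans hxy, hyb⟩
  by_cases hbx : b ≤ x
  · exact hbc x ⟨hbx, hxy.trans hy.2⟩ y ⟨hbx.trans hxy, hy.2⟩
  rw [not_le] at hyb hbx
  calc dist (f x) (f y) ≤ dist (f x) (f b) + dist (f b) (f y) := dist_triangle _ _ _
    _ ≤ K * dist x b + K * dist b y :=
        add_le_add (hab x ⟨hx.1, hbx.le⟩ b ⟨hx.1.trans hbx.le, le_rfl⟩)
          (hbc b ⟨le_rfl, hyb.le.trans hy.2⟩ y ⟨hyb.le, hy.2⟩)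
    _ = K * dist x y := by
        rw [Real.dist_eq, Real.dist_eq, Real.dist_eq, abs_of_neg (sub_neg.2 hbx),
          abs_of_neg (sub_neg.2 hyb), abs_of_nonpos (sub_nonpos.2 hxy)]
        ring

lemma LipschitzOnWith.Icc_of_pieces {N : ℝ} (k : ℕ)
    (hf : ∀ j < k, LipschitzOnWith K f (Icc (j / N) ((j + 1) / N))) :
    LipschitzOnWith K f (Icc 0 (k / N)) := by
  induction k with
  | zero =>
    rw [lipschitzOnWith_iff_dist_le_mul]
    intro x hx y hy
    simp_all
  | succ k ih =>
    push_cast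
    exact (ih fun j hj => hf j (by omega)).Icc_union_Icc (hf k (by omega))

end Lipschitz

lemma lipschitzOnWith_Icc_of_affine {f : ℝ → ℝ} {a b p q D : ℝ} (hpq : p < q)
    (hf : ∀ u ∈ Icc p q, f u = a * u + b) (hD : |f q - f p| ≤ D) :
    LipschitzOnWith (D / (q - p)).toNNReal f (Icc p q) := by
  refine LipschitzOnWith.of_dist_le' fun x hx y hy => ?_
  have hslope : |a| ≤ D / (q - p) := by
    rw [le_div_iff₀ (sub_pos.2 hpq)]
    calc |a| * (q - p) = |f q - f p| := by
          rw [hf q ⟨hpq.le, le_rfl⟩, hf p ⟨le_rfl, hpq.le⟩, ← abs_of_pos (sub_pos.2 hpq),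
            ← abs_mul]
          ring_nf
      _ ≤ D := hD
  rw [Real.dist_eq, Real.dist_eq, hf x hx, hf y hy, add_sub_add_right_eq_sub, ← mul_sub, abs_mul]
  exact mul_le_mul_of_nonneg_right hslope (abs_nonneg _)

lemma exists_inv_pow_le_le_mul {M x : ℝ} (hM : 1 < M) (hx : 0 < x) (hxM : x ≤ M) :
    ∃ n : ℕ, (M ^ n)⁻¹ ≤ x ∧ x ≤ M * (M ^ n)⁻¹ := by
  obtain ⟨n, hn, hn'⟩ := exists_nat_pow_near ((one_le_div hx).2 hxM) hM
  have hMn : 0 < M ^ n := by positivity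
  rw [le_div_iff₀ hx, ← le_div_iff₀' hMn] at hn
  rw [pow_succ, div_lt_iff₀ hx] at hn'
  refine ⟨n, (inv_le_iff_one_le_mul₀' hMn).2 ?_, by rwa [← div_eq_mul_inv]⟩
  nlinarith

lemma rpow_sub_one_mul_rpow_le {M h x γ γt : ℝ} (hM : 1 ≤ M) (hx : 0 < x) (hxh : x ≤ M * h)
    (hγ0 : 0 ≤ γ) (hγ1 : γ ≤ 1) : h ^ (γ - 1) * x ^ (1 + γt - γ) ≤ M * x ^ γt := by
  have hM0 : 0 < M := by linarith
  calc h ^ (γ - 1) * x ^ (1 + γt - γ) ≤ (x / M) ^ (γ - 1) * x ^ (1 + γt - γ) := by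
        refine mul_le_mul_of_nonneg_right ?_ (by positivity)
        exact Real.rpow_le_rpow_of_nonpos (div_pos hx hM0) ((div_le_iff₀' hM0).2 hxh)
          (by linarith)
    _ = M ^ (1 - γ) * x ^ γt := by
        rw [Real.div_rpow hx.le hM0.le, div_mul_eq_mul_div, ← Real.rpow_add hx,
          div_eq_mul_inv, ← Real.rpow_neg hM0.le, neg_sub, mul_comm]
        ring_nf
    _ ≤ M * x ^ γt := by
        gcongr
        exact Real.rpow_le_self_of_one_le hM (by linarith)

def IsAffineOnMAdicIntervals (M n : ℕ) (g : ℝ → ℝ) : Prop :=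
  ∀ j : ℕ, j < 2 * M ^ n → ∃ a b : ℝ,
    ∀ u ∈ Icc ((j : ℝ) / (M : ℝ) ^ n) (((j : ℝ) + 1) / (M : ℝ) ^ n), g u = a * u + b

section Bootstrap

variable {M : ℕ} {γt γ C K : ℝ} {Yn : ℕ → ℝ → ℝ} {Y : ℝ → ℝ}

lemma lipschitzOnWith_approximant (hM : 1 ≤ M) (hC : 0 ≤ C) (hγ : γ ≤ γt)
    (happrox : ∀ n, ∀ u ∈ Icc (0 : ℝ) 2, |Yn n u - Y u| ≤ C * ((M : ℝ) ^ n)⁻¹ ^ γt)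
    (haffine : ∀ n, IsAffineOnMAdicIntervals M n (Yn n))
    (hY : ∀ u ∈ Icc (0 : ℝ) 2, ∀ v ∈ Icc (0 : ℝ) 2, |Y u - Y v| ≤ K * |u - v| ^ γ) (n : ℕ) :
    LipschitzOnWith ((2 * C + K) * ((M : ℝ) ^ n)⁻¹ ^ (γ - 1)).toNNReal (Yn n) (Icc 0 2) := by
  have hMn : (0 : ℝ) < (M : ℝ) ^ n := pow_pos (by exact_mod_cast hM) n
  set h := ((M : ℝ) ^ n)⁻¹
  have h0 : 0 < h := inv_pos.2 hMn
  have h1 : h ≤ 1 := inv_le_one_of_one_le₀ (one_le_pow₀ (by exact_mod_cast hM))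
  have hgrid : ∀ i : ℕ, i ≤ 2 * M ^ n → (i : ℝ) / (M : ℝ) ^ n ∈ Icc (0 : ℝ) 2 := fun i hi =>
    ⟨by positivity, (div_le_iff₀ hMn).2 (by exact_mod_cast hi)⟩
  have hIcc : Icc (0 : ℝ) 2 = Icc 0 (((2 * M ^ n : ℕ) : ℝ) / (M : ℝ) ^ n) := by
    push_cast
    rw [mul_div_cancel_right₀ _ hMn.ne']
  rw [hIcc]
  refine LipschitzOnWith.Icc_of_pieces _ fun j hj => ?_
  obtain ⟨a, b, hab⟩ := haffine n j hj
  set p := (j : ℝ) / (M : ℝ) ^ n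
  set q := ((j : ℝ) + 1) / (M : ℝ) ^ n
  have hp := hgrid j hj.le
  have hq : q ∈ Icc (0 : ℝ) 2 := by simpa using hgrid (j + 1) hj
  have hlen : q - p = h := by rw [← sub_div, add_sub_cancel_left, one_div]
  have hend : |Yn n q - Yn n p| ≤ (2 * C + K) * h ^ γ := by
    have hγt : h ^ γt ≤ h ^ γ := Real.rpow_le_rpow_of_exponent_ge h0 h1 hγ
    have hYqp := hY q hq p hp
    rw [hlen, abs_of_pos h0] at hYqp
    calc |Yn n q - Yn n p| = |(Yn n q - Y q) + (Y q - Y p) + (Y p - Yn n p)| := by ring_nf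
      _ ≤ |Yn n q - Y q| + |Y q - Y p| + |Y p - Yn n p| := abs_add_three _ _ _
      _ ≤ C * h ^ γt + K * h ^ γ + C * h ^ γt := by
          gcongr
          · exact happrox n q hq
          · rw [abs_sub_comm]; exact happrox n p hp
      _ ≤ (2 * C + K) * h ^ γ := by nlinarith
  have hpiece := lipschitzOnWith_Icc_of_affine (by linarith) hab hend
  rwa [hlen, mul_div_assoc, ← Real.rpow_sub_one h0.ne'] at hpiece

lemma abs_sub_le_of_approximant (hM : 1 ≤ M) (hC : 0 ≤ C) (hK : 0 ≤ K) (hγ : γ ≤ γt)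
    (happrox : ∀ n, ∀ u ∈ Icc (0 : ℝ) 2, |Yn n u - Y u| ≤ C * ((M : ℝ) ^ n)⁻¹ ^ γt)
    (haffine : ∀ n, IsAffineOnMAdicIntervals M n (Yn n))
    (hY : ∀ u ∈ Icc (0 : ℝ) 2, ∀ v ∈ Icc (0 : ℝ) 2, |Y u - Y v| ≤ K * |u - v| ^ γ)
    (n : ℕ) {u v : ℝ} (hu : u ∈ Icc (0 : ℝ) 2) (hv : v ∈ Icc (0 : ℝ) 2) :
    |Y u - Y v| ≤ 2 * C * ((M : ℝ) ^ n)⁻¹ ^ γt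
      + (2 * C + K) * ((M : ℝ) ^ n)⁻¹ ^ (γ - 1) * |u - v| := by
  have hL : 0 ≤ (2 * C + K) * ((M : ℝ) ^ n)⁻¹ ^ (γ - 1) := by positivity
  have hlip := (lipschitzOnWith_iff_dist_le_mul.1
    (lipschitzOnWith_approximant hM hC hγ happrox haffine hY n)) u hu v hv
  rw [Real.coe_toNNReal _ hL, Real.dist_eq, Real.dist_eq] at hlip
  calc |Y u - Y v| = |(Y u - Yn n u) + (Yn n u - Yn n v) + (Yn n v - Y v)| := by ring_nf
    _ ≤ |Y u - Yn n u| + |Yn n u - Yn n v| + |Yn n v - Y v| := abs_add_three _ _ _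
    _ ≤ C * ((M : ℝ) ^ n)⁻¹ ^ γt + (2 * C + K) * ((M : ℝ) ^ n)⁻¹ ^ (γ - 1) * |u - v|
          + C * ((M : ℝ) ^ n)⁻¹ ^ γt := by
        gcongr
        · rw [abs_sub_comm]; exact happrox n u hu
        · exact happrox n v hv
    _ = _ := by ring

theorem IsHolderOn.bootstrap_step (hM : 2 ≤ M) (hC : 0 ≤ C) (hγ0 : 0 ≤ γ) (hγ1 : γ ≤ 1)
    (hγ : γ < γt)
    (happrox : ∀ n, ∀ u ∈ Icc (0 : ℝ) 2, |Yn n u - Y u| ≤ C * ((M : ℝ) ^ n)⁻¹ ^ γt)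
    (haffine : ∀ n, IsAffineOnMAdicIntervals M n (Yn n))
    (hY : IsHolderOn Y (Icc 0 2) γ) : IsHolderOn Y (Icc 0 2) (γt / (1 + γt - γ)) := by
  obtain ⟨K, hK0, hK⟩ := hY.exists_nonneg_const
  have hM1 : (1 : ℝ) < M := by exact_mod_cast hM
  have hθ : 1 < 1 + γt - γ := by linarith
  refine ⟨2 * C + (2 * C + K) * M, fun u hu v hv => ?_⟩
  rcases eq_or_ne u v with rfl | huv
  · have hγ' : γt / (1 + γt - γ) ≠ 0 := (div_pos (by linarith) (by linarith)).ne'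
    rw [sub_self, sub_self, abs_zero, Real.zero_rpow hγ', mul_zero]
  have hd : 0 < |u - v| := abs_pos.2 (sub_ne_zero.2 huv)
  set x := |u - v| ^ (1 + γt - γ)⁻¹
  have hx0 : 0 < x := by positivity
  have hd2 : |u - v| ≤ 2 := by simpa [Real.dist_eq] using Real.dist_le_of_mem_Icc hu hv
  have hxM : x ≤ M := calc
    x ≤ 2 ^ (1 + γt - γ)⁻¹ := Real.rpow_le_rpow hd.le hd2 (by positivity)
    _ ≤ 2 := Real.rpow_le_self_of_one_le one_le_two (inv_le_one_of_one_le₀ hθ.le)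
    _ ≤ M := by exact_mod_cast hM
  have hdx : |u - v| = x ^ (1 + γt - γ) := (Real.rpow_inv_rpow hd.le (by linarith)).symm
  obtain ⟨n, hnx, hxn⟩ := exists_inv_pow_le_le_mul hM1 hx0 hxM
  calc |Y u - Y v| ≤ 2 * C * ((M : ℝ) ^ n)⁻¹ ^ γt
        + (2 * C + K) * (((M : ℝ) ^ n)⁻¹ ^ (γ - 1) * x ^ (1 + γt - γ)) := by
        rw [← hdx, ← mul_assoc]
        exact abs_sub_le_of_approximant (by omega) hC hK0 hγ.le happrox haffine hK n hu hv
    _ ≤ 2 * C * x ^ γt + (2 * C + K) * (M * x ^ γt) := by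
        have hγt0 : 0 ≤ γt := by linarith
        gcongr 2 * C * ?_ + _ * ?_
        · exact Real.rpow_le_rpow (by positivity) hnx hγt0
        · exact rpow_sub_one_mul_rpow_le hM1.le hx0 hxn hγ0 hγ1
    _ = (2 * C + (2 * C + K) * M) * |u - v| ^ (γt / (1 + γt - γ)) := by
        rw [hdx, ← Real.rpow_mul hx0.le, mul_div_cancel₀ _ (by linarith)]
        ring

end Bootstrap

theorem holder_bootstrap_general
    (M : ℕ) (hM : 2 ≤ M)
    (γt : ℝ) (hγt0 : 0 < γt) (hγt1 : γt ≤ 1)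
    (Yn : ℕ → ℝ → ℝ) (Y : ℝ → ℝ)
    (C : ℝ) (hC : 0 < C)
    (happrox : ∀ n, ∀ u ∈ Set.Icc (0 : ℝ) 2,
      |Yn n u - Y u| ≤ C * ((M : ℝ) ^ n) ⁻¹ ^ γt)
    (haffine : ∀ n, ∀ j : ℕ, j < 2 * M ^ n → ∃ a b : ℝ,
      ∀ u ∈ Set.Icc ((j : ℝ) / (M : ℝ) ^ n) (((j : ℝ) + 1) / (M : ℝ) ^ n),
        Yn n u = a * u + b)
    (hbound : ∃ B : ℝ, ∀ u ∈ Set.Icc (0 : ℝ) 2, |Y u| ≤ B)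
    (γseq : ℕ → ℝ) (hγ0 : γseq 0 = 0)
    (hγrec : ∀ m, γseq (m + 1) = γt / (1 + γt - γseq m)) :
    (∀ m : ℕ,
      (∃ C' : ℝ, ∀ u ∈ Set.Icc (0 : ℝ) 2, ∀ v ∈ Set.Icc (0 : ℝ) 2,
        |Y u - Y v| ≤ C' * |u - v| ^ (γseq m)) →
      (∃ C' : ℝ, ∀ u ∈ Set.Icc (0 : ℝ) 2, ∀ v ∈ Set.Icc (0 : ℝ) 2,
        |Y u - Y v| ≤ C' * |u - v| ^ (γseq (m + 1)))) ∧
    (∀ γ : ℝ, 0 < γ → γ < γt →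
      ∃ C' : ℝ, ∀ u ∈ Set.Icc (0 : ℝ) 2, ∀ v ∈ Set.Icc (0 : ℝ) 2,
        |Y u - Y v| ≤ C' * |u - v| ^ γ) := by
  have hstep (m : ℕ) (hm : IsHolderOn Y (Icc 0 2) (γseq m)) :
      IsHolderOn Y (Icc 0 2) (γseq (m + 1)) := by
    obtain ⟨hm0, hmγt⟩ := bootstrapSeq_mem_Ico hγt0 hγ0 hγrec m
    rw [hγrec m]
    exact hm.bootstrap_step hM hC.le hm0 (hmγt.le.trans hγt1) hmγt happrox haffine
  have hholder (m : ℕ) : IsHolderOn Y (Icc 0 2) (γseq m) := by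
    induction m with
    | zero => exact hγ0 ▸ IsHolderOn.of_bounded hbound
    | succ m ih => exact hstep m ih
  refine ⟨hstep, fun γ _ hγ => ?_⟩
  obtain ⟨m, hm⟩ := exists_lt_bootstrapSeq hγt0 hγt1 hγ0 hγrec hγ
  exact (hholder m).of_exponent_le hm.le

/-- **Hölder bootstrap.** Suppose `Y_n → Y` uniformly on `[0,2]` at rate
`C·M^{-nγ̃}`, each `Y_n` is affine on generation-`n` `M`-adic intervals, and `Y` is
bounded. Define `γ_0 = 0`, `γ_{m+1} = γ̃/(1+γ̃−γ_m)`. Then `Y` is `γ_{m+1}`-Hölder on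
`[0,2]` whenever it is `γ_m`-Hölder; consequently `Y` is `γ`-Hölder for every `γ < γ̃`. -/
theorem holder_bootstrap
    (M : ℕ) (hM : 2 ≤ M)
    (γt : ℝ) (hγt0 : 0 < γt) (hγt1 : γt ≤ 1)
    (Yn : ℕ → ℝ → ℝ) (Y : ℝ → ℝ)
    (hnonneg : ∀ n, ∀ u ∈ Set.Icc (0 : ℝ) 2, 0 ≤ Yn n u)
    (C : ℝ) (hC : 0 < C)
    (happrox : ∀ n, ∀ u ∈ Set.Icc (0 : ℝ) 2,
      |Yn n u - Y u| ≤ C * ((M : ℝ) ^ n) ⁻¹ ^ γt)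
    (haffine : ∀ n, ∀ j : ℕ, j < 2 * M ^ n → ∃ a b : ℝ,
      ∀ u ∈ Set.Icc ((j : ℝ) / (M : ℝ) ^ n) (((j : ℝ) + 1) / (M : ℝ) ^ n),
        Yn n u = a * u + b)
    (hbound : ∃ B : ℝ, ∀ u ∈ Set.Icc (0 : ℝ) 2, |Y u| ≤ B)
    (γseq : ℕ → ℝ) (hγ0 : γseq 0 = 0)
    (hγrec : ∀ m, γseq (m + 1) = γt / (1 + γt - γseq m)) :
    (∀ m : ℕ,
      (∃ C' : ℝ, ∀ u ∈ Set.Icc (0 : ℝ) 2, ∀ v ∈ Set.Icc (0 : ℝ) 2,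
        |Y u - Y v| ≤ C' * |u - v| ^ (γseq m)) →
      (∃ C' : ℝ, ∀ u ∈ Set.Icc (0 : ℝ) 2, ∀ v ∈ Set.Icc (0 : ℝ) 2,
        |Y u - Y v| ≤ C' * |u - v| ^ (γseq (m + 1)))) ∧
    (∀ γ : ℝ, 0 < γ → γ < γt →
      ∃ C' : ℝ, ∀ u ∈ Set.Icc (0 : ℝ) 2, ∀ v ∈ Set.Icc (0 : ℝ) 2,
        |Y u - Y v| ≤ C' * |u - v| ^ γ) :=
  holder_bootstrap_general M hM γt hγt0 hγt1 Yn Y C hC happrox haffine hbound γseq hγ0 hγrec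
end

section
/- Let M ≥ 2 be even, n ≥ 1, and suppose A ⊆ [0,1] is a set such that for every n and every M-adic interval Q of generation n intersecting A, the set of generation-(n+1) children of Q intersecting A corresponds to a translate E + a (mod M) of a fixed set E ⊆ ℤ_M, where E contains no 3-term arithmetic progression in ℤ_M and all elements of E are even. If moreover A contains no endpoint of any M-adic interval, then A contains no 3-term arithmetic progression y_1 < y_2 < y_3 with y_2 = (y_1+y_3)/2. -/
/-!
Take the first generation `m + 1` at which `y₁` and `y₃` lie in different `M`-adic intervals.
At generation `m` all three points lie in one interval `Q`, so their generation-`(m + 1)` digits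
`k₁, k₂, k₃` all lie in one translate `E + a`. Since `y₂` is the midpoint, `|2 k₂ - k₁ - k₃| ≤ 1`;
since `E` is even and `M` is even, `k₁ ≡ k₃ (mod 2)`, hence `2 k₂ = k₁ + k₃`. This is a 3-term
progression in `E + a`, so it is trivial and `k₁ = k₃`, contradicting the choice of `m`.
Excluding endpoints guarantees `y₃ < 1`, so that `m` exists.
-/

open Set

section Floor

variable {K : Type*} [Field K] [LinearOrder K] [IsStrictOrderedRing K] [FloorSemiring K]

theorem Nat.floor_mul_eq_iff_mem_Ico {x c : K} {N : ℕ} (hx : 0 ≤ x) (hc : 0 < c) :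
    ⌊x * c⌋₊ = N ↔ x ∈ Ico ((N : K) / c) ((N + 1) / c) := by
  rw [Nat.floor_eq_iff (by positivity), mem_Ico, div_le_iff₀ hc, lt_div_iff₀ hc]

theorem Nat.floor_mul_pow_succ_div (x : K) {M : ℕ} (hM : M ≠ 0) (n : ℕ) :
    ⌊x * (M : K) ^ (n + 1)⌋₊ / M = ⌊x * (M : K) ^ n⌋₊ := by
  rw [← Nat.floor_div_natCast, pow_succ, ← mul_assoc,
    mul_div_cancel_right₀ _ (Nat.cast_ne_zero.2 hM)]

theorem mem_Ico_floor_mul_pow_succ_mod {x : K} {M : ℕ} (hM : M ≠ 0) (hx : 0 ≤ x) (n : ℕ) :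
    x ∈ Ico (((⌊x * (M : K) ^ n⌋₊ : K) * M + (⌊x * (M : K) ^ (n + 1)⌋₊ % M : ℕ)) /
        (M : K) ^ (n + 1))
      (((⌊x * (M : K) ^ n⌋₊ : K) * M + (⌊x * (M : K) ^ (n + 1)⌋₊ % M : ℕ) + 1) /
        (M : K) ^ (n + 1)) := by
  have hdecomp : (⌊x * (M : K) ^ n⌋₊ : K) * M + (⌊x * (M : K) ^ (n + 1)⌋₊ % M : ℕ) =
      (⌊x * (M : K) ^ (n + 1)⌋₊ : K) := by
    rw [← Nat.floor_mul_pow_succ_div x hM n, mul_comm]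
    exact_mod_cast Nat.div_add_mod _ M
  rw [hdecomp]
  exact (Nat.floor_mul_eq_iff_mem_Ico hx (by positivity)).1 rfl

theorem Nat.floor_midpoint_bounds {u v w : K} (hu : 0 ≤ u) (hw : 0 ≤ w) (hv : 2 * v = u + w) :
    2 * ⌊v⌋₊ ≤ ⌊u⌋₊ + ⌊w⌋₊ + 1 ∧ ⌊u⌋₊ + ⌊w⌋₊ ≤ 2 * ⌊v⌋₊ + 1 := by
  have hv0 : 0 ≤ v := by linarith
  have hlo : (2 * ⌊v⌋₊ : K) < ⌊u⌋₊ + ⌊w⌋₊ + 1 + 1 := by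
    linarith [Nat.floor_le hv0, Nat.lt_floor_add_one u, Nat.lt_floor_add_one w]
  have hhi : (⌊u⌋₊ + ⌊w⌋₊ : K) < 2 * ⌊v⌋₊ + 1 + 1 := by
    linarith [Nat.floor_le hu, Nat.floor_le hw, Nat.lt_floor_add_one v]
  exact ⟨Nat.lt_succ_iff.1 (by exact_mod_cast hlo), Nat.lt_succ_iff.1 (by exact_mod_cast hhi)⟩

theorem exists_floor_mul_pow_eq_and_succ_ne [Archimedean K] {x y b : K} (hx : 0 ≤ x)
    (hxy : x < y) (hy : y < 1) (hb : 1 < b) :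
    ∃ m : ℕ, ⌊x * b ^ m⌋₊ = ⌊y * b ^ m⌋₊ ∧ ⌊x * b ^ (m + 1)⌋₊ ≠ ⌊y * b ^ (m + 1)⌋₊ := by
  have hsep : ∃ n : ℕ, ⌊x * b ^ n⌋₊ ≠ ⌊y * b ^ n⌋₊ := by
    obtain ⟨n, hn⟩ := pow_unbounded_of_one_lt (1 / (y - x)) hb
    refine ⟨n, (Nat.lt_of_succ_le ?_).ne⟩
    have hgap : x * b ^ n + 1 ≤ y * b ^ n := by
      rw [div_lt_iff₀ (sub_pos.2 hxy)] at hn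
      linarith
    have hx' : 0 ≤ x * b ^ n := mul_nonneg hx (pow_nonneg (by linarith) n)
    simpa [Nat.floor_add_one hx'] using Nat.floor_mono hgap
  have hzero : ⌊x * b ^ 0⌋₊ = ⌊y * b ^ 0⌋₊ := by
    simp [Nat.floor_eq_zero.2 (hxy.trans hy), Nat.floor_eq_zero.2 hy]
  simpa using Nat.exists_not_and_succ_of_not_zero_of_exists (not_not.2 hzero) hsep

end Floor

section Digits

theorem threeAPFree_of_no_progression {R : Type*} [CommRing R] {E : Set R}
    (hE : ∀ a r : R, r ≠ 0 → ¬(a ∈ E ∧ a + r ∈ E ∧ a + 2 * r ∈ E)) : ThreeAPFree E := by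
  intro a ha b hb c hc habc
  by_contra hab
  refine hE a (b - a) (sub_ne_zero.2 (Ne.symm hab)) ⟨ha, ?_, ?_⟩
  · rwa [add_sub_cancel]
  · rwa [show a + 2 * (b - a) = c by linear_combination -habc]

variable {M : ℕ} {E : Set (ZMod M)} {a : ZMod M}

theorem mod_two_eq_of_mem_translate (hM : Even M)
    (hEeven : ∀ e ∈ E, ∃ k : ℕ, Even k ∧ (k : ZMod M) = e) {k k' : ℕ}
    (hk : ∃ e ∈ E, e + a = k) (hk' : ∃ e ∈ E, e + a = k') : k % 2 = k' % 2 := by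
  let φ := ZMod.castHom hM.two_dvd (ZMod 2)
  have hφ : ∀ n : ℕ, (∃ e ∈ E, e + a = n) → (n : ZMod 2) = φ a := by
    rintro n ⟨e, he, hn⟩
    obtain ⟨t, ht, rfl⟩ := hEeven e he
    rw [← map_natCast φ n, ← hn, map_add, map_natCast,
      (ZMod.natCast_eq_zero_iff t 2).2 ht.two_dvd, zero_add]
  exact (ZMod.natCast_eq_natCast_iff' k k' 2).1 ((hφ k hk).trans (hφ k' hk').symm)

theorem eq_of_mem_translate_of_near_midpoint (hM : Even M) (hE : ThreeAPFree E)
    (hEeven : ∀ e ∈ E, ∃ k : ℕ, Even k ∧ (k : ZMod M) = e) {k₁ k₂ k₃ : ℕ}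
    (hk₁M : k₁ < M) (hk₂M : k₂ < M) (hk₁ : ∃ e ∈ E, e + a = k₁) (hk₂ : ∃ e ∈ E, e + a = k₂)
    (hk₃ : ∃ e ∈ E, e + a = k₃) (hlo : 2 * k₂ ≤ k₁ + k₃ + 1) (hhi : k₁ + k₃ ≤ 2 * k₂ + 1) :
    k₁ = k₃ := by
  have hpar := mod_two_eq_of_mem_translate hM hEeven hk₁ hk₃
  have hprog : k₁ + k₃ = k₂ + k₂ := by omega
  obtain ⟨e₁, he₁, h₁⟩ := hk₁
  obtain ⟨e₂, he₂, h₂⟩ := hk₂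
  obtain ⟨e₃, he₃, h₃⟩ := hk₃
  have he : e₁ + e₃ = e₂ + e₂ := by
    have := congrArg (Nat.cast : ℕ → ZMod M) hprog
    push_cast at this
    rw [← h₁, ← h₂, ← h₃] at this
    linear_combination this
  have hk₁₂ : (k₁ : ZMod M) = k₂ := by rw [← h₁, ← h₂, hE he₁ he₂ he₃ he]
  rw [ZMod.natCast_eq_natCast_iff', Nat.mod_eq_of_lt hk₁M, Nat.mod_eq_of_lt hk₂M] at hk₁₂
  omega

end Digits

/-- Let `M` be even, and let `E ⊆ ℤ_M` be free of 3-term arithmetic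
progressions with all elements even. If `A ⊆ [0,1]` is such that, at every scale, the
children of each `M`-adic interval meeting `A` are exactly those whose digits lie in a
translate `E + a (mod M)`, and `A` contains no endpoint of an `M`-adic interval, then
`A` contains no 3-term arithmetic progression. -/
theorem no_three_term_AP
    (M : ℕ) (hM2 : 2 ≤ M) (hMeven : Even M)
    (E : Set (ZMod M))
    (hE3 : ∀ a r : ZMod M, r ≠ 0 → ¬(a ∈ E ∧ a + r ∈ E ∧ a + 2 * r ∈ E))
    (hEeven : ∀ e ∈ E, ∃ k : ℕ, Even k ∧ (k : ZMod M) = e)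
    (A : Set ℝ) (hA : A ⊆ Set.Icc (0 : ℝ) 1)
    (hchildren : ∀ n j : ℕ, j < M ^ n →
      (A ∩ Set.Ico ((j : ℝ) / (M : ℝ) ^ n) (((j : ℝ) + 1) / (M : ℝ) ^ n)).Nonempty →
      ∃ a : ZMod M, ∀ k : ℕ, k < M →
        ((A ∩ Set.Ico (((j : ℝ) * M + k) / (M : ℝ) ^ (n + 1))
            (((j : ℝ) * M + k + 1) / (M : ℝ) ^ (n + 1))).Nonempty ↔
          ∃ e ∈ E, e + a = (k : ZMod M)))
    (hnoend : ∀ x ∈ A, ∀ n j : ℕ, x ≠ (j : ℝ) / (M : ℝ) ^ n) :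
    ¬ ∃ y₁ y₂ y₃ : ℝ, y₁ ∈ A ∧ y₂ ∈ A ∧ y₃ ∈ A ∧
        y₁ < y₂ ∧ y₂ < y₃ ∧ y₂ = (y₁ + y₃) / 2 := by
  rintro ⟨y₁, y₂, y₃, hy₁, hy₂, hy₃, h₁₂, h₂₃, hmid⟩
  have hM0 : M ≠ 0 := by omega
  have hy₃1 : y₃ < 1 := (hA hy₃).2.lt_of_ne (by simpa using hnoend y₃ hy₃ 0 1)
  obtain ⟨m, hsame, hsplit⟩ := exists_floor_mul_pow_eq_and_succ_ne (hA hy₁).1 (h₁₂.trans h₂₃)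
    hy₃1 (by exact_mod_cast hM2 : (1 : ℝ) < M)
  set j := ⌊y₁ * (M : ℝ) ^ m⌋₊
  have hj₂ : ⌊y₂ * (M : ℝ) ^ m⌋₊ = j := le_antisymm
    (hsame ▸ Nat.floor_mono (by gcongr)) (Nat.floor_mono (by gcongr))
  have hj : j < M ^ m := by
    rw [Nat.floor_lt (mul_nonneg (hA hy₁).1 (by positivity)), Nat.cast_pow]
    exact mul_lt_of_lt_one_left (by positivity) ((h₁₂.trans h₂₃).trans hy₃1)
  obtain ⟨a, ha⟩ := hchildren m j hj
    ⟨y₁, hy₁, (Nat.floor_mul_eq_iff_mem_Ico (hA hy₁).1 (by positivity)).1 rfl⟩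
  have hdigit : ∀ y ∈ A, ⌊y * (M : ℝ) ^ m⌋₊ = j →
      ∃ e ∈ E, e + a = ((⌊y * (M : ℝ) ^ (m + 1)⌋₊ % M : ℕ) : ZMod M) := by
    intro y hy hyj
    refine (ha _ (Nat.mod_lt _ (by omega))).1 ⟨y, hy, ?_⟩
    rw [← hyj]
    exact mem_Ico_floor_mul_pow_succ_mod hM0 (hA hy).1 m
  have hparent : ∀ y : ℝ, ⌊y * (M : ℝ) ^ m⌋₊ = j →
      ⌊y * (M : ℝ) ^ (m + 1)⌋₊ = M * j + ⌊y * (M : ℝ) ^ (m + 1)⌋₊ % M := fun y hy => by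
    rw [← hy, ← Nat.floor_mul_pow_succ_div y hM0 m, Nat.div_add_mod]
  obtain ⟨hlo, hhi⟩ := Nat.floor_midpoint_bounds (u := y₁ * (M : ℝ) ^ (m + 1))
    (v := y₂ * (M : ℝ) ^ (m + 1)) (w := y₃ * (M : ℝ) ^ (m + 1))
    (mul_nonneg (hA hy₁).1 (by positivity)) (mul_nonneg (hA hy₃).1 (by positivity))
    (by rw [hmid]; ring)
  rw [hparent y₁ rfl, hparent y₂ hj₂, hparent y₃ hsame.symm] at hlo hhi
  have hk := eq_of_mem_translate_of_near_midpoint hMeven (threeAPFree_of_no_progression hE3)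
    hEeven (Nat.mod_lt _ (by omega)) (Nat.mod_lt _ (by omega)) (hdigit y₁ hy₁ rfl)
    (hdigit y₂ hy₂ hj₂) (hdigit y₃ hy₃ hsame.symm) (by omega) (by omega)
  exact hsplit (by rw [hparent y₁ rfl, hparent y₃ hsame.symm, hk])
end

section
/- (Behrend) For every c' > 0 there exists c > 0 such that for all sufficiently large N, there exists a set E ⊆ {1,…,N} with no 3-term arithmetic progressions and |E| ≥ exp(−c√(log N))·N; in particular, for every ε > 0 and all sufficiently large N there is a progression-free subset of {1,…,N} of size at least N^{1−ε}. -/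
/-!
Behrend's sphere construction gives `rothNumberNat N ≥ N exp(-4√(log N))`
(`Behrend.roth_lower_bound`); since `[1, N]` is a translate of `[0, N)`, it has a 3AP-free subset
of that size. The second bound follows because `4√(log N) ≤ ε log N` once `log N ≥ (4/ε)²`.
-/

open Filter Finset Real

lemma exists_threeAPFree_subset_Icc_card_eq_rothNumberNat (N : ℕ) :
    ∃ E ⊆ Icc 1 N, #E = rothNumberNat N ∧ ThreeAPFree (E : Set ℕ) := by
  simpa [← Ico_add_one_right_eq_Icc, addRothNumber_Ico] using addRothNumber_spec (Icc 1 N)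

lemma ThreeAPFree.not_ap_of_pos {s : Set ℕ} (hs : ThreeAPFree s) {a r : ℕ} (hr : 0 < r) :
    ¬(a ∈ s ∧ a + r ∈ s ∧ a + 2 * r ∈ s) := by
  rintro ⟨ha, har, ha2r⟩
  have := hs ha har ha2r (by ring)
  omega

lemma mul_sqrt_le_mul_of_div_sq_le {c ε L : ℝ} (hε : 0 < ε) (hL : (c / ε) ^ 2 ≤ L) :
    c * √L ≤ ε * L := by
  have hc : c ≤ ε * √L := by
    rw [← div_le_iff₀' hε]
    exact (le_abs_self _).trans (abs_le_sqrt hL)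
  calc c * √L ≤ ε * √L * √L := by gcongr
    _ = ε * L := by rw [mul_assoc, mul_self_sqrt ((sq_nonneg _).trans hL)]

lemma eventually_rpow_one_sub_le_exp_neg_mul_sqrt_log_mul (c : ℝ) {ε : ℝ} (hε : 0 < ε) :
    ∀ᶠ x : ℝ in atTop, x ^ (1 - ε) ≤ exp (-c * √(log x)) * x := by
  filter_upwards [tendsto_log_atTop.eventually_ge_atTop ((c / ε) ^ 2), eventually_gt_atTop 0]
    with x hlog hx
  calc x ^ (1 - ε) = exp (-(ε * log x)) * x := by
        rw [rpow_def_of_pos hx, ← exp_log hx, ← exp_add, exp_log hx]; ring_nf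
    _ ≤ exp (-c * √(log x)) * x := by
        gcongr
        linarith [mul_sqrt_le_mul_of_div_sq_le hε hlog]

/-- **Behrend.** There exists `c > 0` such that for all sufficiently large
`N` there is a set `E ⊆ {1,…,N}` with no 3-term arithmetic progression and
`|E| ≥ exp(−c√(log N))·N`; in particular, for every `ε > 0` and all sufficiently large
`N` there is a progression-free subset of `{1,…,N}` of size at least `N^{1−ε}`. -/
theorem behrend_progression_free_sets :
    (∃ c : ℝ, 0 < c ∧ ∀ᶠ N : ℕ in atTop, ∃ E : Finset ℕ,
      E ⊆ Finset.Icc 1 N ∧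
      (∀ a r : ℕ, 0 < r → ¬(a ∈ E ∧ a + r ∈ E ∧ a + 2 * r ∈ E)) ∧
      Real.exp (-c * Real.sqrt (Real.log N)) * N ≤ E.card) ∧
    (∀ ε : ℝ, 0 < ε → ∀ᶠ N : ℕ in atTop, ∃ E : Finset ℕ,
      E ⊆ Finset.Icc 1 N ∧
      (∀ a r : ℕ, 0 < r → ¬(a ∈ E ∧ a + r ∈ E ∧ a + 2 * r ∈ E)) ∧
      (N : ℝ) ^ (1 - ε) ≤ E.card) := by
  have behrend (N : ℕ) : ∃ E : Finset ℕ, E ⊆ Icc 1 N ∧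
      (∀ a r : ℕ, 0 < r → ¬(a ∈ E ∧ a + r ∈ E ∧ a + 2 * r ∈ E)) ∧
      exp (-4 * √(log N)) * N ≤ #E := by
    obtain ⟨E, hE, hcard, hfree⟩ := exists_threeAPFree_subset_Icc_card_eq_rothNumberNat N
    refine ⟨E, hE, fun a r hr ↦ hfree.not_ap_of_pos hr, ?_⟩
    rw [hcard, mul_comm]
    exact Behrend.roth_lower_bound
  refine ⟨⟨4, by norm_num, .of_forall behrend⟩, fun ε hε ↦ ?_⟩
  filter_upwards [tendsto_natCast_atTop_atTop.eventually
    (eventually_rpow_one_sub_le_exp_neg_mul_sqrt_log_mul 4 hε)] with N hN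
  obtain ⟨E, hE, hfree, hcard⟩ := behrend N
  exact ⟨E, hE, hfree, hN.trans hcard⟩
end

section
/- If A ⊆ ℝ contains a homothetic image of every m-element subset of ℝ (m ≥ 3), then dim_H(A^m) ≥ m − 2 and dim_P(A) ≥ 1 − 2/m, where dim_P denotes packing dimension. -/
open Set Filter
open scoped ENNReal

/-- Number of dyadic intervals of generation `n` meeting `A`. -/
noncomputable def covN (A : Set ℝ) (n : ℕ) : ℕ :=
  {k : ℤ | (A ∩ Set.Ico ((k : ℝ) / 2 ^ n) (((k : ℝ) + 1) / 2 ^ n)).Nonempty}.ncard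

/-- Upper box-counting (Minkowski) dimension of a set of reals. -/
noncomputable def upperBoxDim (A : Set ℝ) : ℝ :=
  Filter.limsup (fun n : ℕ => Real.log (covN A n) / (n * Real.log 2)) atTop

/-- Packing dimension, via the countable-cover regularization of upper box dimension. -/
noncomputable def packDim (A : Set ℝ) : ℝ :=
  sInf {s : ℝ | ∃ F : ℕ → Set ℝ, (A ⊆ ⋃ n, F n) ∧
    ∀ n, Bornology.IsBounded (F n) ∧ upperBoxDim (F n) ≤ s}

/-!
If `A` contains a homothetic copy of every `m`-point set, then every `t ∈ ℝ^{m-2}` for which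
`(0, 1, t)` has distinct entries is the normalized pattern `Π x = ((x_j - x_0) / (x_1 - x_0))_j`
of a point `x ∈ A^m`. Since `Π` is `C¹` off `{x_1 = x_0}`, `Π(A^m)` contains a ball of
`ℝ^{m-2}` and `dim_H (A^m) ≥ m - 2`.

Conversely, if `A` is covered by countably many bounded sets of upper box dimension `< s`, then
`A^m` is covered by countably many products of them, each of which meets at most `2^{nms}`
dyadic cubes of side `2^{-n}` for large `n`; so `dim_H (A^m) ≤ ms`, whence `m - 2 ≤ m dim_P A`.
-/

open Topology MeasureTheory

theorem dimH_image_le_of_contDiffAt {E F : Type*} [NormedAddCommGroup E] [NormedSpace ℝ E]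
    [FiniteDimensional ℝ E] [NormedAddCommGroup F] [NormedSpace ℝ F] {f : E → F} {s : Set E}
    (hf : ∀ x ∈ s, ContDiffAt ℝ 1 f x) : dimH (f '' s) ≤ dimH s :=
  dimH_image_le_of_locally_lipschitzOn fun x hx =>
    let ⟨C, t, ht, hC⟩ := (hf x hx).exists_lipschitzOnWith
    ⟨C, t, nhdsWithin_le_nhds ht, hC⟩

section Pattern

variable {k : ℕ}

/-- The map `Π` of the paper, with coordinates indexed from `0`. -/
noncomputable def normalizedPattern (x : Fin (k + 2) → ℝ) : Fin k → ℝ :=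
  fun j => (x j.succ.succ - x 0) / (x 1 - x 0)

theorem contDiffAt_normalizedPattern {x : Fin (k + 2) → ℝ} (hx : x 1 ≠ x 0) :
    ContDiffAt ℝ 1 normalizedPattern x := by
  have hproj (i : Fin (k + 2)) : ContDiffAt ℝ 1 (fun y : Fin (k + 2) → ℝ => y i) x :=
    contDiffAt_apply ℝ _ i x
  exact contDiffAt_pi.2 fun j =>
    ((hproj _).sub (hproj 0)).div ((hproj 1).sub (hproj 0)) (sub_ne_zero.2 hx)

theorem normalizedPattern_homothety (x : Fin (k + 2) → ℝ) {lam : ℝ} (hlam : lam ≠ 0) (t : ℝ) :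
    normalizedPattern (fun i => lam * x i + t) = normalizedPattern x := by
  funext j
  simp only [normalizedPattern, add_sub_add_right_eq_sub, ← mul_sub]
  exact mul_div_mul_left _ _ hlam

@[simp]
theorem normalizedPattern_cons (t : Fin k → ℝ) :
    normalizedPattern (Fin.cons 0 (Fin.cons 1 t) : Fin (k + 2) → ℝ) = t := by
  funext j
  simp [normalizedPattern]

theorem injective_cons_of_mem_ball {t : Fin k → ℝ}
    (ht : t ∈ Metric.ball (fun j : Fin k => (j : ℝ) + 2) (1 / 2)) :
    Function.Injective (Fin.cons 0 (Fin.cons 1 t) : Fin (k + 2) → ℝ) := by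
  have hdist (j : Fin k) : |t j - ((j : ℝ) + 2)| < 1 / 2 := by
    simpa [Real.dist_eq] using (dist_pi_lt_iff (by norm_num)).1 (Metric.mem_ball.1 ht) j
  have hgt (j : Fin k) : 1 < t j := by
    linarith [(abs_lt.1 (hdist j)).1, (Nat.cast_nonneg j : (0 : ℝ) ≤ j)]
  refine Fin.cons_injective_iff.2 ⟨?_, Fin.cons_injective_iff.2 ⟨?_, fun i j hij => ?_⟩⟩
  · rintro ⟨i, hi⟩
    induction i using Fin.cases with
    | zero => simp at hi
    | succ j => exact (zero_lt_one.trans (hgt j)).ne' (by simpa using hi)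
  · rintro ⟨j, hj⟩
    exact (hgt j).ne' hj
  · have hi := abs_sub_lt_iff.1 (hdist i)
    have hj := abs_sub_lt_iff.1 (hdist j)
    have hij' : (i : ℕ) < j + 1 := by exact_mod_cast (by linarith : ((i : ℕ) : ℝ) < j + 1)
    have hji' : (j : ℕ) < i + 1 := by exact_mod_cast (by linarith : ((j : ℕ) : ℝ) < i + 1)
    exact Fin.ext (by omega)

theorem subset_image_normalizedPattern {A : Set ℝ}
    (hA : ∀ F : Finset ℝ, F.card = k + 2 →
      ∃ lam t : ℝ, lam ≠ 0 ∧ (fun x => lam * x + t) '' (F : Set ℝ) ⊆ A) :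
    {t : Fin k → ℝ | Function.Injective (Fin.cons 0 (Fin.cons 1 t) : Fin (k + 2) → ℝ)} ⊆
      normalizedPattern '' {x | (∀ i, x i ∈ A) ∧ x 1 ≠ x 0} := by
  intro t ht
  set s : Fin (k + 2) → ℝ := Fin.cons 0 (Fin.cons 1 t)
  obtain ⟨lam, c, hlam, hsub⟩ := hA (Finset.univ.image s) (by
    rw [Finset.card_image_of_injective _ ht, Finset.card_univ, Fintype.card_fin])
  refine ⟨fun i => lam * s i + c, ⟨fun i => hsub ⟨s i, by simp, rfl⟩, ?_⟩, ?_⟩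
  · simpa [s] using hlam
  · rw [normalizedPattern_homothety _ hlam, normalizedPattern_cons]

theorem natCast_le_dimH_pi_of_forall_homothetic {A : Set ℝ}
    (hA : ∀ F : Finset ℝ, F.card = k + 2 →
      ∃ lam t : ℝ, lam ≠ 0 ∧ (fun x => lam * x + t) '' (F : Set ℝ) ⊆ A) :
    (k : ℝ≥0∞) ≤ dimH {x : Fin (k + 2) → ℝ | ∀ i, x i ∈ A} :=
  calc (k : ℝ≥0∞) = dimH (Metric.ball (fun j : Fin k => (j : ℝ) + 2) (1 / 2)) :=
        (Real.dimH_ball_pi_fin _ (by norm_num)).symm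
    _ ≤ dimH (normalizedPattern '' {x | (∀ i, x i ∈ A) ∧ x 1 ≠ x 0}) :=
        dimH_mono fun _ ht => subset_image_normalizedPattern hA (injective_cons_of_mem_ball ht)
    _ ≤ dimH {x : Fin (k + 2) → ℝ | (∀ i, x i ∈ A) ∧ x 1 ≠ x 0} :=
        dimH_image_le_of_contDiffAt fun _ hx => contDiffAt_normalizedPattern hx.2
    _ ≤ dimH {x : Fin (k + 2) → ℝ | ∀ i, x i ∈ A} := dimH_mono fun _ hx => hx.1

end Pattern

theorem hausdorffMeasure_eq_zero_of_dyadic_covers {X : Type*} [EMetricSpace X]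
    [MeasurableSpace X] [BorelSpace X] {s : Set X} {ι : ℕ → Type*} [∀ n, Finite (ι n)]
    (t : ∀ n, ι n → Set X) (hst : ∀ n, s ⊆ ⋃ i, t n i)
    (ht : ∀ n i, Metric.ediam (t n i) ≤ ENNReal.ofReal ((2 ^ n)⁻¹)) {a d : ℝ}
    (hcard : ∀ᶠ n in atTop, (Nat.card (ι n) : ℝ) ≤ 2 ^ (n * a)) (hd : 0 ≤ d) (had : a < d) :
    μH[d] s = 0 := by
  have := fun n => Fintype.ofFinite (ι n)
  have hr : Tendsto (fun n : ℕ => ENNReal.ofReal ((2 ^ n)⁻¹)) atTop (𝓝 0) := by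
    simpa using (ENNReal.tendsto_ofReal (tendsto_inv_atTop_zero.comp
      (tendsto_pow_atTop_atTop_of_one_lt (one_lt_two (α := ℝ)))))
  have hq : Tendsto (fun n : ℕ => ENNReal.ofReal ((2 ^ (a - d)) ^ n)) atTop (𝓝 0) := by
    simpa using ENNReal.tendsto_ofReal (tendsto_pow_atTop_nhds_zero_of_lt_one (by positivity)
      (Real.rpow_lt_one_of_one_lt_of_neg one_lt_two (sub_neg.2 had)))
  have hsum : ∀ᶠ n in atTop,
      ∑ i, Metric.ediam (t n i) ^ d ≤ ENNReal.ofReal ((2 ^ (a - d)) ^ n) := by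
    filter_upwards [hcard] with n hn
    calc ∑ i, Metric.ediam (t n i) ^ d
        ≤ ∑ _i : ι n, ENNReal.ofReal ((2 ^ n)⁻¹) ^ d :=
          Finset.sum_le_sum fun i _ => ENNReal.rpow_le_rpow (ht n i) hd
      _ = ENNReal.ofReal (Nat.card (ι n) * ((2 ^ n)⁻¹) ^ d) := by
          rw [Finset.sum_const, Finset.card_univ, nsmul_eq_mul, ENNReal.ofReal_mul (by positivity),
            ENNReal.ofReal_natCast, ENNReal.ofReal_rpow_of_nonneg (by positivity) hd,
            Nat.card_eq_fintype_card]
      _ ≤ ENNReal.ofReal ((2 ^ (a - d)) ^ n) := by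
          refine ENNReal.ofReal_le_ofReal ?_
          calc (Nat.card (ι n) : ℝ) * ((2 ^ n)⁻¹) ^ d ≤ 2 ^ (n * a) * ((2 ^ n)⁻¹) ^ d := by
                gcongr
            _ = (2 ^ (a - d)) ^ n := by
                rw [← Real.rpow_natCast, ← Real.rpow_natCast, Real.inv_rpow (by positivity),
                  ← Real.rpow_mul (by norm_num), ← Real.rpow_neg (by positivity),
                  ← Real.rpow_add (by norm_num), ← Real.rpow_mul (by norm_num)]
                ring_nf
  refine le_antisymm ?_ zero_le
  calc μH[d] s ≤ liminf (fun n => ∑ i, Metric.ediam (t n i) ^ d) atTop :=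
        Measure.hausdorffMeasure_le_liminf_sum d s _ hr t
          (Eventually.of_forall (ht ·)) (Eventually.of_forall hst)
    _ ≤ liminf (fun n : ℕ => ENNReal.ofReal ((2 ^ (a - d)) ^ n)) atTop := liminf_le_liminf hsum
    _ = 0 := hq.liminf_eq

theorem dimH_le_of_dyadic_covers {X : Type*} [EMetricSpace X] {s : Set X} {ι : ℕ → Type*}
    [∀ n, Finite (ι n)] (t : ∀ n, ι n → Set X) (hst : ∀ n, s ⊆ ⋃ i, t n i)
    (ht : ∀ n i, Metric.ediam (t n i) ≤ ENNReal.ofReal ((2 ^ n)⁻¹)) {a : ℝ}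
    (hcard : ∀ᶠ n in atTop, (Nat.card (ι n) : ℝ) ≤ 2 ^ (n * a)) :
    dimH s ≤ ENNReal.ofReal a := by
  borelize X
  refine dimH_le fun d hd => ?_
  by_contra! had
  replace had : a < d := by
    contrapose! had
    rw [← ENNReal.ofReal_coe_nnreal]
    exact ENNReal.ofReal_le_ofReal had
  exact ENNReal.zero_ne_top <|
    (hausdorffMeasure_eq_zero_of_dyadic_covers t hst ht hcard d.2 had).symm.trans hd

section Dyadic

variable {A : Set ℝ} {n : ℕ}

def dyadicInterval (n : ℕ) (k : ℤ) : Set ℝ := Ico (k / 2 ^ n) ((k + 1) / 2 ^ n)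

def dyadicIndices (A : Set ℝ) (n : ℕ) : Set ℤ := {k | (A ∩ dyadicInterval n k).Nonempty}

theorem covN_eq_ncard_dyadicIndices : covN A n = (dyadicIndices A n).ncard := rfl

theorem mem_dyadicInterval_iff {x : ℝ} {k : ℤ} : x ∈ dyadicInterval n k ↔ ⌊x * 2 ^ n⌋ = k := by
  rw [Int.floor_eq_iff, dyadicInterval, mem_Ico, div_le_iff₀ (by positivity),
    lt_div_iff₀ (by positivity)]

theorem floor_mem_dyadicIndices {x : ℝ} (hx : x ∈ A) : ⌊x * 2 ^ n⌋ ∈ dyadicIndices A n :=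
  ⟨x, hx, mem_dyadicInterval_iff.2 rfl⟩

theorem ediam_dyadicInterval (n : ℕ) (k : ℤ) :
    Metric.ediam (dyadicInterval n k) = ENNReal.ofReal ((2 ^ n)⁻¹) := by
  rw [dyadicInterval, Real.ediam_Ico, ← sub_div, add_sub_cancel_left, one_div]

theorem dyadicIndices_subset_Icc {R : ℝ} (hA : ∀ x ∈ A, |x| ≤ R) (n : ℕ) :
    dyadicIndices A n ⊆ Icc ⌊-R * 2 ^ n⌋ ⌊R * 2 ^ n⌋ := by
  rintro k ⟨x, hxA, hxk⟩
  rw [← mem_dyadicInterval_iff.1 hxk]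
  obtain ⟨hlo, hhi⟩ := abs_le.1 (hA x hxA)
  exact ⟨Int.floor_mono (by gcongr), Int.floor_mono (by gcongr)⟩

theorem covN_le {R : ℝ} (hR : 0 ≤ R) (hA : ∀ x ∈ A, |x| ≤ R) (n : ℕ) :
    (covN A n : ℝ) ≤ (2 * R + 2) * 2 ^ n := by
  have h2n : (1 : ℝ) ≤ 2 ^ n := one_le_pow₀ one_le_two
  have hlo : -R * 2 ^ n - 1 < ⌊-R * 2 ^ n⌋ := Int.sub_one_lt_floor _
  have hhi : (⌊R * 2 ^ n⌋ : ℝ) ≤ R * 2 ^ n := Int.floor_le _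
  have hcard : covN A n ≤ (⌊R * 2 ^ n⌋ + 1 - ⌊-R * 2 ^ n⌋).toNat := by
    rw [covN_eq_ncard_dyadicIndices, ← Int.card_Icc, ← Set.ncard_coe_finset, Finset.coe_Icc]
    exact Set.ncard_le_ncard (dyadicIndices_subset_Icc hA n) (finite_Icc _ _)
  have hfloor : ⌊-R * 2 ^ n⌋ ≤ ⌊R * 2 ^ n⌋ := Int.floor_mono (by nlinarith)
  calc (covN A n : ℝ) ≤ ((⌊R * 2 ^ n⌋ + 1 - ⌊-R * 2 ^ n⌋ : ℤ) : ℝ) := by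
        exact_mod_cast (by omega : (covN A n : ℤ) ≤ ⌊R * 2 ^ n⌋ + 1 - ⌊-R * 2 ^ n⌋)
    _ ≤ (2 * R + 2) * 2 ^ n := by push_cast; nlinarith

theorem finite_dyadicIndices (hA : Bornology.IsBounded A) (n : ℕ) :
    (dyadicIndices A n).Finite := by
  obtain ⟨R, -, hR⟩ := hA.exists_pos_norm_le
  exact (finite_Icc _ _).subset (dyadicIndices_subset_Icc hR n)

theorem exists_log_covN_div_le (hA : Bornology.IsBounded A) :
    ∃ c, 0 ≤ c ∧ ∀ n : ℕ, Real.log (covN A n) / (n * Real.log 2) ≤ 1 + c / n := by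
  obtain ⟨R, hR, hAR⟩ := hA.exists_pos_norm_le
  have hlog2 : 0 < Real.log 2 := Real.log_pos one_lt_two
  have hlogC : 0 ≤ Real.log (2 * R + 2) := Real.log_nonneg (by linarith)
  refine ⟨Real.log (2 * R + 2) / Real.log 2, by positivity, fun n => ?_⟩
  rcases Nat.eq_zero_or_pos n with rfl | hn
  · simp
  have hlog : Real.log (covN A n) ≤ Real.log (2 * R + 2) + n * Real.log 2 := by
    rw [← Real.log_pow, ← Real.log_mul (by positivity) (by positivity)]
    rcases Nat.eq_zero_or_pos (covN A n) with h | h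
    · rw [h, Nat.cast_zero, Real.log_zero]
      exact Real.log_nonneg (one_le_mul_of_one_le_of_one_le (by linarith) (one_le_pow₀ one_le_two))
    · exact Real.log_le_log (by exact_mod_cast h) (covN_le hR.le hAR n)
  calc Real.log (covN A n) / (n * Real.log 2)
      ≤ (Real.log (2 * R + 2) + n * Real.log 2) / (n * Real.log 2) := by gcongr
    _ = 1 + Real.log (2 * R + 2) / Real.log 2 / n := by field_simp; ring

theorem isBoundedUnder_log_covN_div (hA : Bornology.IsBounded A) :
    IsBoundedUnder (· ≤ ·) atTop fun n : ℕ => Real.log (covN A n) / (n * Real.log 2) := by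
  obtain ⟨c, hc, hle⟩ := exists_log_covN_div_le hA
  refine isBoundedUnder_of ⟨1 + c, fun n => (hle n).trans ?_⟩
  rcases Nat.eq_zero_or_pos n with rfl | hn
  · simpa using hc
  · exact add_le_add_right (div_le_self hc (Nat.one_le_cast.2 hn)) 1

theorem upperBoxDim_le_one (hA : Bornology.IsBounded A) : upperBoxDim A ≤ 1 := by
  obtain ⟨c, -, hle⟩ := exists_log_covN_div_le hA
  have hlim : Tendsto (fun n : ℕ => 1 + c / n) atTop (𝓝 1) := by
    simpa using tendsto_const_nhds.add (tendsto_const_div_atTop_nhds_zero_nat c)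
  calc upperBoxDim A ≤ limsup (fun n : ℕ => 1 + c / n) atTop :=
        limsup_le_limsup (Eventually.of_forall hle)
          (isCoboundedUnder_le_of_le atTop fun n => by positivity) hlim.isBoundedUnder_le
    _ = 1 := hlim.limsup_eq

theorem eventually_covN_le_of_upperBoxDim_lt (hA : Bornology.IsBounded A) {a : ℝ}
    (h : upperBoxDim A < a) : ∀ᶠ n : ℕ in atTop, (covN A n : ℝ) ≤ 2 ^ (n * a) := by
  filter_upwards [eventually_lt_of_limsup_lt h (isBoundedUnder_log_covN_div hA),
    eventually_gt_atTop 0] with n hn hn0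
  rcases Nat.eq_zero_or_pos (covN A n) with h0 | h0
  · rw [h0, Nat.cast_zero]; positivity
  rw [div_lt_iff₀ (by positivity)] at hn
  rw [← Real.exp_log (by exact_mod_cast h0 : (0 : ℝ) < covN A n),
    Real.rpow_def_of_pos two_pos]
  exact Real.exp_le_exp.2 (by linarith)

end Dyadic

theorem dimH_pi_le_of_upperBoxDim_lt {ι : Type*} [Fintype ι] {B : ι → Set ℝ}
    (hB : ∀ i, Bornology.IsBounded (B i)) {a : ℝ} (h : ∀ i, upperBoxDim (B i) < a) :
    dimH {x : ι → ℝ | ∀ i, x i ∈ B i} ≤ ENNReal.ofReal (Fintype.card ι * a) := by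
  have := fun n i => (finite_dyadicIndices (hB i) n).to_subtype
  refine dimH_le_of_dyadic_covers (ι := fun n => ∀ i, dyadicIndices (B i) n)
    (fun n φ => univ.pi fun i => dyadicInterval n (φ i)) (fun n x hx => ?_)
    (fun n φ => Metric.ediam_pi_le_of_le fun i => (ediam_dyadicInterval n _).le) ?_
  · exact mem_iUnion.2 ⟨fun i => ⟨_, floor_mem_dyadicIndices (hx i)⟩,
      mem_univ_pi.2 fun i => mem_dyadicInterval_iff.2 rfl⟩
  · filter_upwards [eventually_all.2 fun i => eventually_covN_le_of_upperBoxDim_lt (hB i) (h i)]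
      with n hn
    calc (Nat.card (∀ i, dyadicIndices (B i) n) : ℝ) = ∏ i, (covN (B i) n : ℝ) := by
          simp [Nat.card_pi, Nat.card_coe_set_eq, covN_eq_ncard_dyadicIndices]
      _ ≤ ∏ _i : ι, (2 : ℝ) ^ (n * a) :=
          Finset.prod_le_prod (fun _ _ => by positivity) fun i _ => hn i
      _ = 2 ^ (n * (Fintype.card ι * a)) := by
          rw [Finset.prod_const, Finset.card_univ, ← Real.rpow_mul_natCast two_pos.le]
          ring_nf

theorem dimH_pi_le_of_cover {ι : Type*} [Fintype ι] {A : Set ℝ} {F : ℕ → Set ℝ}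
    (hAF : A ⊆ ⋃ n, F n) (hF : ∀ n, Bornology.IsBounded (F n)) {a : ℝ}
    (h : ∀ n, upperBoxDim (F n) < a) :
    dimH {x : ι → ℝ | ∀ i, x i ∈ A} ≤ ENNReal.ofReal (Fintype.card ι * a) :=
  calc dimH {x : ι → ℝ | ∀ i, x i ∈ A}
      ≤ dimH (⋃ φ : ι → ℕ, {x : ι → ℝ | ∀ i, x i ∈ F (φ i)}) := dimH_mono fun x hx => by
        choose φ hφ using fun i => mem_iUnion.1 (hAF (hx i))
        exact mem_iUnion.2 ⟨φ, hφ⟩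
    _ = ⨆ φ : ι → ℕ, dimH {x : ι → ℝ | ∀ i, x i ∈ F (φ i)} := dimH_iUnion _
    _ ≤ _ := iSup_le fun _ => dimH_pi_le_of_upperBoxDim_lt (fun _ => hF _) fun _ => h _

theorem div_card_le_packDim_of_le_dimH_pi {ι : Type*} [Fintype ι] [Nonempty ι] {A : Set ℝ}
    {d : ℝ} (hd : 0 < d) (h : ENNReal.ofReal d ≤ dimH {x : ι → ℝ | ∀ i, x i ∈ A}) :
    d / Fintype.card ι ≤ packDim A := by
  refine le_csInf ⟨1, fun n => Icc (-n) n, fun x _ => ?_,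
    fun n => ⟨Metric.isBounded_Icc _ _, upperBoxDim_le_one (Metric.isBounded_Icc _ _)⟩⟩ ?_
  · obtain ⟨n, hn⟩ := exists_nat_ge |x|
    exact mem_iUnion.2 ⟨n, abs_le.1 hn⟩
  rintro s ⟨F, hAF, hF⟩
  refine le_of_forall_gt_imp_ge_of_dense fun a hsa => ?_
  have hcard : (0 : ℝ) < Fintype.card ι := by exact_mod_cast Fintype.card_pos
  rw [div_le_iff₀' hcard]
  have := h.trans (dimH_pi_le_of_cover hAF (fun n => (hF n).1) fun n => (hF n).2.trans_lt hsa)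
  exact (ENNReal.ofReal_le_ofReal_iff'.1 this).resolve_right hd.not_ge

/-- If `A ⊆ ℝ` contains a homothetic image of every `m`-element set
(`m ≥ 3`), then `dim_H(A^m) ≥ m − 2` and the packing dimension of `A` is at least
`1 − 2/m`. -/
theorem dim_of_universal_pattern_set
    (m : ℕ) (hm : 3 ≤ m) (A : Set ℝ)
    (hA : ∀ F : Finset ℝ, F.card = m →
      ∃ lam t : ℝ, lam ≠ 0 ∧ (fun x => lam * x + t) '' (F : Set ℝ) ⊆ A) :
    (m : ℝ≥0∞) - 2 ≤ dimH {x : Fin m → ℝ | ∀ i, x i ∈ A} ∧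
    1 - 2 / (m : ℝ) ≤ packDim A := by
  obtain ⟨k, rfl⟩ : ∃ k, m = k + 2 := ⟨m - 2, by omega⟩
  have hdim := natCast_le_dimH_pi_of_forall_homothetic hA
  refine ⟨by simpa [ENNReal.add_sub_cancel_right] using hdim, ?_⟩
  have hk : (0 : ℝ) < k := by exact_mod_cast (by omega : 0 < k)
  have hpack := div_card_le_packDim_of_le_dimH_pi hk (by simpa using hdim)
  rw [Fintype.card_fin] at hpack
  convert hpack using 1
  push_cast
  field_simp
  ring
end
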